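/- The safety operator is definable from the safe-announcement modality: for any model M, state s, and formula φ: M,s ⊨ ▲φ if and only if M,s ⊨ ¬[φ⟡!]⊥, i.e., there exists an agent who can safely announce φ. -/

import Mathlib

/-- An epistemic (Kripke) model over agent set `Agt` and state set `St`. -/
structure Model (Agt : Type) (St : Type) where
  rel : Agt → St → St → Prop
  val : ℕ → St → Prop

/-- The model is an epistemic model proper: each agent's relation is an equivalence. -/
def isEquivModel {Agt St : Type} (M : Model Agt St) : Prop :=
  ∀ a, Equivalence (M.rel a)

/-- Formulas: atoms, ⊥, →, ∧, K_a, ▲ (safety), [φ⟡]ψ (pseudo-anonymous announcement),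
    [φ⟡!]ψ (safe/intentional anonymous announcement). -/
inductive Form (Agt : Type) : Type where
  | atom : ℕ → Form Agt
  | bot  : Form Agt
  | imp  : Form Agt → Form Agt → Form Agt
  | and  : Form Agt → Form Agt → Form Agt
  | K    : Agt → Form Agt → Form Agt
  | tri  : Form Agt → Form Agt
  | annA : Form Agt → Form Agt → Form Agt
  | annS : Form Agt → Form Agt → Form Agt

def Form.neg {Agt : Type} (φ : Form Agt) : Form Agt := .imp φ .bot

/-- One step of the safety operator: `⋁_{G ∈ N³} E_G (P ∧ X)`. -/
def fsafe {Agt St : Type} (M : Model Agt St) (P X : St → Prop) (s : St) : Prop :=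
  ∃ G : Finset Agt, G.card = 3 ∧ ∀ a ∈ G, ∀ t, M.rel a s t → P t ∧ X t

/-- `▲P` semantically: greatest fixpoint of `fsafe M P`, i.e. union of post-fixed points. -/
def triSem {Agt St : Type} (M : Model Agt St) (P : St → Prop) (s : St) : Prop :=
  ∃ X : St → Prop, X s ∧ ∀ t, X t → fsafe M P X t

/-- Product update of `M` with an action model whose events are `E`, relation `arel`, and
    (semantic) preconditions `pre`.  States not satisfying the precondition are cut off
    from the relation (this encodes the restriction to legal states). -/
def prodUpd {Agt St E : Type} (M : Model Agt St) (arel : Agt → E → E → Prop)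
    (pre : E → St → Prop) : Model Agt (St × E) where
  rel c p q := pre p.2 p.1 ∧ pre q.2 q.1 ∧ M.rel c p.1 q.1 ∧ arel c p.2 q.2
  val n p := M.val n p.1

/-- Action relation of the pseudo-anonymous action model: `a ∼_c b` iff `(a = c ↔ b = c)`. -/
def anonRel {Agt : Type} (c a b : Agt) : Prop := (a = c ↔ b = c)

/-- The pseudo-anonymous style update `M^{φ⟡}` (with precondition `pre a`). -/
def updA {Agt St : Type} (M : Model Agt St) (pre : Agt → St → Prop) : Model Agt (St × Agt) :=
  prodUpd M anonRel pre

/-- Satisfaction. -/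
def Sat {Agt : Type} : {St : Type} → Model Agt St → St → Form Agt → Prop
  | _, M, s, .atom n => M.val n s
  | _, _, _, .bot => False
  | _, M, s, .imp φ ψ => Sat M s φ → Sat M s ψ
  | _, M, s, .and φ ψ => Sat M s φ ∧ Sat M s ψ
  | _, M, s, .K a φ => ∀ t, M.rel a s t → Sat M t φ
  | _, M, s, .tri φ => triSem M (fun t => Sat M t φ) s
  | _, M, s, .annA φ ψ => ∀ a, (∀ t, M.rel a s t → Sat M t φ) →
      Sat (updA M (fun b t => ∀ u, M.rel b t u → Sat M u φ)) (s, a) ψ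
  | _, M, s, .annS φ ψ => ∀ a, (∀ t, M.rel a s t → triSem M (fun u => Sat M u φ) t) →
      Sat (updA M (fun b t => ∀ u, M.rel b t u → triSem M (fun v => Sat M v φ) u)) (s, a) ψ

/-- The pseudo-anonymous update `M^{φ⟡}`. -/
def updAnn {Agt St : Type} (M : Model Agt St) (φ : Form Agt) : Model Agt (St × Agt) :=
  updA M (fun b t => ∀ u, M.rel b t u → Sat M u φ)

/-- The safe (intentional) anonymous update `M^{φ⟡!}`. -/
def updSafe {Agt St : Type} (M : Model Agt St) (φ : Form Agt) : Model Agt (St × Agt) :=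
  updA M (fun b t => ∀ u, M.rel b t u → triSem M (fun v => Sat M v φ) u)

/-- Public announcement update: restriction of `M` to `P` (encoded by cutting the relation). -/
def restrict {Agt St : Type} (M : Model Agt St) (P : St → Prop) : Model Agt St where
  rel a x y := P x ∧ P y ∧ M.rel a x y
  val := M.val

/-- Iterative approximations `▲_n`. -/
def triN {Agt St : Type} (M : Model Agt St) (P : St → Prop) : ℕ → St → Prop
  | 0 => P
  | n + 1 => fun s => P s ∧ ∃ G : Finset Agt, G.card = 3 ∧
      ∀ a ∈ G, ∀ t, M.rel a s t → triN M P n t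

/-- Standard bisimulation between two models. -/
structure Bisim {Agt St₁ St₂ : Type} (M₁ : Model Agt St₁) (M₂ : Model Agt St₂)
    (Z : St₁ → St₂ → Prop) : Prop where
  atoms : ∀ s t, Z s t → ∀ n, (M₁.val n s ↔ M₂.val n t)
  forth : ∀ s t, Z s t → ∀ a u, M₁.rel a s u → ∃ v, M₂.rel a t v ∧ Z u v
  back  : ∀ s t, Z s t → ∀ a v, M₂.rel a t v → ∃ u, M₁.rel a s u ∧ Z u v

/-- `f` is a group assignment function for `M`. -/
def GroupAssign {Agt St : Type} (M : Model Agt St) (f : St → Finset Agt) : Prop :=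
  (∀ t, f t = ∅ ∨ (f t).card = 3) ∧
  (∀ t t' i, i ∈ f t → M.rel i t t' → f t' ≠ ∅)

/-- `σ : Fin (m+1) → St` is an `f`-consistent path. -/
def FPath {Agt St : Type} (M : Model Agt St) (f : St → Finset Agt) (m : ℕ)
    (σ : Fin (m + 1) → St) : Prop :=
  ∀ k : Fin m, ∃ a ∈ f (σ k.castSucc), M.rel a (σ k.castSucc) (σ k.succ)

section Safety

variable {Agt St : Type} {M : Model Agt St} {P X : St → Prop} {s : St}

theorem fsafe.exists_agent (h : fsafe M P X s) : ∃ a, ∀ t, M.rel a s t → X t := by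
  obtain ⟨G, hG, hGX⟩ := h
  obtain ⟨a, ha⟩ := Finset.card_pos.mp (by omega : 0 < G.card)
  exact ⟨a, fun t hst => (hGX a ha t hst).2⟩

theorem triSem.fsafe_triSem (h : triSem M P s) : fsafe M P (triSem M P) s := by
  obtain ⟨X, hXs, hX⟩ := h
  obtain ⟨G, hG, hGX⟩ := hX s hXs
  exact ⟨G, hG, fun a ha t hst => ⟨(hGX a ha t hst).1, X, (hGX a ha t hst).2, hX⟩⟩

theorem triSem.exists_knows (h : triSem M P s) : ∃ a, ∀ t, M.rel a s t → triSem M P t :=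
  h.fsafe_triSem.exists_agent

theorem triSem_of_knows {a : Agt} (hrefl : M.rel a s s)
    (h : ∀ t, M.rel a s t → triSem M P t) : triSem M P s :=
  h s hrefl

end Safety

theorem sat_neg_annS_bot_iff {Agt St : Type} (M : Model Agt St) (s : St) (φ : Form Agt) :
    Sat M s (Form.neg (.annS φ .bot)) ↔
      ∃ a, ∀ t, M.rel a s t → triSem M (fun u => Sat M u φ) t := by
  simp only [Form.neg, Sat, imp_false, not_forall, not_exists, not_not]

theorem stmt7 {Agt St : Type}
    (M : Model Agt St) (hM : isEquivModel M) (s : St) (φ : Form Agt) :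
    Sat M s (.tri φ) ↔ Sat M s (Form.neg (.annS φ .bot)) := by
  rw [sat_neg_annS_bot_iff]
  exact ⟨triSem.exists_knows, fun ⟨a, ha⟩ => triSem_of_knows ((hM a).refl s) ha⟩
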